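/- Fix T > 0, let (E, ℰ) be a measurable space with a σ-finite measure λ, and let λ_T be the product of Lebesgue measure on [0,T] with λ. Let G : [0,T] × E → [0,∞) be measurable with ∫_{[0,T]×E} G² dλ_T < ∞, and suppose there exists δ > 0 such that ∫_X exp(δ G²) dλ_T < ∞ for every measurable X ⊆ [0,T] × E with λ_T(X) < ∞. Then for every Υ > 0 and every η > 0 there exists δ′ > 0 such that for every Lebesgue measurable A ⊆ [0,T] with Lebesgue measure less than δ′ one has sup_{ρ ∈ S̃^Υ} ∫_A ∫_E G(s,ξ) |ρ(s,ξ) − 1| λ(dξ) ds ≤ η. -/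

import Mathlib

/-!
Fenchel–Young for `l(b) = b log b - b + 1`, whose convex conjugate is `eᵃ - 1`, together with
`sinh a ≥ a` gives `a |b - 1| ≤ (eᵃ - 1 - a) + l(b)`; with `a = κG` this bounds `κ G |ρ - 1|`.
The term `e^{κG} - 1 - κG` is integrable for every `κ`: it is `O(G²)` where `κ|G| ≤ 1`, and is
dominated by `C e^{δG²}` on the complementary set, which has finite measure by Chebyshev. Taking
`κ = 2Υ/η`, the entropy term contributes at most `η/2` after division by `κ`, and absolute
continuity of the integral of the first term makes its contribution over `A × E` at most `η/2`
once `A` is small.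
-/

open MeasureTheory Real Set InformationTheory

lemma mul_le_exp_sub_one_add_klFun (a : ℝ) {b : ℝ} (hb : 0 ≤ b) :
    a * b ≤ exp a - 1 + klFun b := by
  rw [klFun_apply]
  rcases hb.eq_or_lt with rfl | hb
  · simpa using (exp_pos a).le
  · have hexp : b * exp (a - log b) = exp a := by
      rw [exp_sub, exp_log hb]
      field_simp
    nlinarith [mul_le_mul_of_nonneg_left (add_one_le_exp (a - log b)) hb.le]

lemma exp_sub_one_sub_self_nonneg (x : ℝ) : 0 ≤ exp x - 1 - x := by
  linarith [add_one_le_exp x]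

lemma mul_abs_sub_one_le (a : ℝ) {b : ℝ} (hb : 0 ≤ b) :
    a * |b - 1| ≤ (exp a - 1 - a) + klFun b := by
  rcases lt_or_ge a 0 with ha | ha
  · nlinarith [abs_nonneg (b - 1), exp_sub_one_sub_self_nonneg a, klFun_nonneg hb]
  rcases le_or_gt 1 b with h1 | h1
  · rw [abs_of_nonneg (by linarith)]
    linarith [mul_le_exp_sub_one_add_klFun a hb]
  · have hsinh : a ≤ sinh a := self_le_sinh_iff.mpr ha
    rw [sinh_eq] at hsinh
    rw [abs_of_neg (by linarith)]
    linarith [mul_le_exp_sub_one_add_klFun (-a) hb]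

lemma abs_mul_le_mul_sq_add (κ x : ℝ) {δ : ℝ} (hδ : 0 < δ) :
    |κ * x| ≤ δ * x ^ 2 + κ ^ 2 / (4 * δ) := by
  have hsq : 0 ≤ (2 * δ * |x| - |κ|) ^ 2 / (4 * δ) := by positivity
  have hexpand : (2 * δ * |x| - |κ|) ^ 2 / (4 * δ) = δ * x ^ 2 + κ ^ 2 / (4 * δ) - |κ * x| := by
    rw [abs_mul]
    field_simp
    rw [← sq_abs x, ← sq_abs κ]
    ring
  linarith

lemma exp_sub_one_sub_self_le_exp_abs (x : ℝ) : exp x - 1 - x ≤ exp |x| := by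
  rcases le_total 0 x with hx | hx
  · rw [abs_of_nonneg hx]
    linarith
  · rw [abs_of_nonpos hx]
    linarith [add_one_le_exp (-x), exp_le_one_iff.mpr hx]

section

variable {α : Type*} [MeasurableSpace α] {μ : Measure α}

theorem integrable_exp_mul_sub_one_sub_mul {G : α → ℝ} (hG : Measurable G)
    (hGsq : Integrable (fun p => G p ^ 2) μ) {δ : ℝ} (hδ : 0 < δ)
    (hexp : ∀ X : Set α, MeasurableSet X → μ X < ⊤ →
      IntegrableOn (fun p => exp (δ * G p ^ 2)) X μ) (κ : ℝ) :
    Integrable (fun p => exp (κ * G p) - 1 - κ * G p) μ := by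
  set X : Set α := {p | 1 ≤ ‖κ ^ 2 * G p ^ 2‖}
  have hXmeas : MeasurableSet X := measurableSet_le measurable_const (by fun_prop)
  have hXfin : μ X < ⊤ := (hGsq.const_mul (κ ^ 2)).measure_norm_ge_lt_top one_pos
  set C := exp (κ ^ 2 / (4 * δ))
  have hdom : Integrable
      (X.indicator (fun p => C * exp (δ * G p ^ 2)) + fun p => κ ^ 2 * G p ^ 2) μ :=
    (IntegrableOn.integrable_indicator ((hexp X hXmeas hXfin).const_mul C) hXmeas).add
      (hGsq.const_mul (κ ^ 2))
  refine hdom.mono' (by fun_prop) (ae_of_all _ fun p => ?_)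
  rw [Real.norm_of_nonneg (exp_sub_one_sub_self_nonneg _), Pi.add_apply]
  by_cases hp : p ∈ X
  · rw [indicator_of_mem hp]
    calc exp (κ * G p) - 1 - κ * G p ≤ exp |κ * G p| := exp_sub_one_sub_self_le_exp_abs _
      _ ≤ C * exp (δ * G p ^ 2) := by
        rw [← exp_add, add_comm]
        exact exp_le_exp.mpr (abs_mul_le_mul_sq_add κ (G p) hδ)
      _ ≤ _ := le_add_of_nonneg_right (by positivity)
  · rw [indicator_of_notMem hp, zero_add]
    have hsmall : |κ * G p| ≤ 1 := by
      have hnonneg : 0 ≤ κ ^ 2 * G p ^ 2 := by positivity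
      simp only [X, mem_ofPred_eq, not_le, Real.norm_of_nonneg hnonneg] at hp
      rw [← sq_le_one_iff_abs_le_one, mul_pow]
      exact hp.le
    calc exp (κ * G p) - 1 - κ * G p ≤ (κ * G p) ^ 2 :=
          (le_abs_self _).trans (abs_exp_sub_one_sub_id_le hsmall)
      _ = κ ^ 2 * G p ^ 2 := mul_pow _ _ _

theorem ofReal_mul_lintegral_mul_abs_sub_one_le {G ρ : α → ℝ} (hρ : Measurable ρ)
    (hρ0 : ∀ p, 0 ≤ ρ p) {κ : ℝ} (hκ : 0 ≤ κ) :
    ENNReal.ofReal κ * ∫⁻ p, ENNReal.ofReal (G p * |ρ p - 1|) ∂μ ≤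
      ∫⁻ p, ENNReal.ofReal (exp (κ * G p) - 1 - κ * G p) ∂μ +
        ∫⁻ p, ENNReal.ofReal (klFun (ρ p)) ∂μ := by
  rw [← lintegral_const_mul' _ _ ENNReal.ofReal_ne_top,
    ← lintegral_add_right (g := fun p => ENNReal.ofReal (klFun (ρ p))) _
      (measurable_klFun.comp hρ).ennreal_ofReal]
  refine lintegral_mono fun p => ?_
  rw [← ENNReal.ofReal_mul hκ,
    ← ENNReal.ofReal_add (exp_sub_one_sub_self_nonneg _) (klFun_nonneg (hρ0 p))]
  refine ENNReal.ofReal_le_ofReal ?_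
  simpa only [mul_assoc] using mul_abs_sub_one_le (κ * G p) (hρ0 p)

end

theorem exists_pos_forall_measure_lt_setLIntegral_prod_univ_lt {α β : Type*}
    [MeasurableSpace α] [MeasurableSpace β] {μ : Measure α} {ν : Measure β}
    [SFinite μ] [SFinite ν]
    {F : α × β → ENNReal} (hF : Measurable F) (hfin : ∫⁻ p, F p ∂μ.prod ν ≠ ⊤)
    {ε : ENNReal} (hε : ε ≠ 0) :
    ∃ d : ℝ, 0 < d ∧ ∀ A : Set α, μ A < ENNReal.ofReal d →
      ∫⁻ p in A ×ˢ univ, F p ∂μ.prod ν < ε := by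
  rw [lintegral_prod F hF.aemeasurable] at hfin
  obtain ⟨d, hd0, hd⟩ := exists_pos_setLIntegral_lt_of_measure_lt hfin hε
  obtain ⟨r, -, hr0, hrd⟩ := ENNReal.lt_iff_exists_real_btwn.mp hd0
  refine ⟨r, ENNReal.ofReal_pos.mp hr0, fun A hA => ?_⟩
  rw [← Measure.restrict_prod_eq_prod_univ, lintegral_prod F hF.aemeasurable]
  exact hd A (hA.trans hrd)

theorem equi_absolute_continuity_controls_general
    {E : Type*} [MeasurableSpace E] (lam : Measure E) [SigmaFinite lam]
    (T : ℝ)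
    (lamT : Measure (ℝ × E))
    (hlamT : lamT = (volume.restrict (Set.Icc (0:ℝ) T)).prod lam)
    (G : ℝ × E → ℝ) (hGmeas : Measurable G)
    (hGsq : Integrable (fun p => G p ^ 2) lamT)
    (δ : ℝ) (hδ : 0 < δ)
    (hexp : ∀ X : Set (ℝ × E), MeasurableSet X → lamT X < ⊤ →
      IntegrableOn (fun p => Real.exp (δ * G p ^ 2)) X lamT)
    (Υ : ℝ) (hΥ : 0 < Υ) :
    ∀ η : ℝ, 0 < η → ∃ δ' : ℝ, 0 < δ' ∧
      ∀ A : Set ℝ, MeasurableSet A → A ⊆ Set.Icc (0:ℝ) T →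
        volume A < ENNReal.ofReal δ' →
        ∀ ρ : ℝ × E → ℝ, Measurable ρ → (∀ p, 0 ≤ ρ p) →
          (∫⁻ p, ENNReal.ofReal (ρ p * Real.log (ρ p) - ρ p + 1) ∂lamT
            ≤ ENNReal.ofReal Υ) →
          ∫⁻ p in A ×ˢ (Set.univ : Set E),
              ENNReal.ofReal (G p * |ρ p - 1|) ∂lamT ≤ ENNReal.ofReal η := by
  intro η hη
  subst hlamT
  set κ := 2 * Υ / η
  have hκ : 0 < κ := by positivity
  have hκη : κ * η = Υ + Υ := by rw [div_mul_cancel₀ _ hη.ne', two_mul]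
  have hint := integrable_exp_mul_sub_one_sub_mul hGmeas hGsq hδ hexp κ
  obtain ⟨d, hd0, hd⟩ := exists_pos_forall_measure_lt_setLIntegral_prod_univ_lt (by fun_prop)
    hint.lintegral_lt_top.ne (ENNReal.ofReal_pos.mpr hΥ).ne'
  refine ⟨d, hd0, fun A _ _ hA ρ hρ hρ0 hent => ?_⟩
  have hentropy : ∫⁻ p in A ×ˢ univ, ENNReal.ofReal (klFun (ρ p))
      ∂(volume.restrict (Icc 0 T)).prod lam ≤ ENNReal.ofReal Υ := by
    refine (setLIntegral_le_lintegral _ _).trans (le_of_eq_of_le ?_ hent)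
    simp only [klFun_apply, add_sub_right_comm]
  refine (ENNReal.mul_le_mul_iff_right (ENNReal.ofReal_pos.mpr hκ).ne'
    ENNReal.ofReal_ne_top).mp ?_
  calc _ ≤ _ := ofReal_mul_lintegral_mul_abs_sub_one_le hρ hρ0 hκ.le
    _ ≤ ENNReal.ofReal Υ + ENNReal.ofReal Υ :=
        add_le_add (hd A ((Measure.restrict_le_self A).trans_lt hA)).le hentropy
    _ = ENNReal.ofReal κ * ENNReal.ofReal η := by
        rw [← ENNReal.ofReal_add hΥ.le hΥ.le, ← ENNReal.ofReal_mul hκ.le, hκη]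

/-- (Lemma 6.7(ii): uniform equi-absolute-continuity.)
Let `λ` be σ-finite on `E`, `λ_T = (Lebesgue on [0,T]) ⊗ λ`, and let `G ≥ 0` be
measurable, square integrable w.r.t. `λ_T`, and exponentially square integrable on
sets of finite `λ_T`-measure.  Then for every `Υ > 0` and `η > 0` there is `δ′ > 0`
such that for every measurable `A ⊆ [0,T]` of Lebesgue measure `< δ′` and every
`ρ ∈ S̃^Υ`, `∫_A ∫_E G |ρ − 1| dλ ds ≤ η`. -/
theorem equi_absolute_continuity_controls
    {E : Type*} [MeasurableSpace E] (lam : Measure E) [SigmaFinite lam]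
    (T : ℝ) (hT : 0 < T)
    (lamT : Measure (ℝ × E))
    (hlamT : lamT = (volume.restrict (Set.Icc (0:ℝ) T)).prod lam)
    (G : ℝ × E → ℝ) (hGmeas : Measurable G) (hGpos : ∀ p, 0 ≤ G p)
    (hGsq : Integrable (fun p => G p ^ 2) lamT)
    (δ : ℝ) (hδ : 0 < δ)
    (hexp : ∀ X : Set (ℝ × E), MeasurableSet X → lamT X < ⊤ →
      IntegrableOn (fun p => Real.exp (δ * G p ^ 2)) X lamT)
    (Υ : ℝ) (hΥ : 0 < Υ) :
    ∀ η : ℝ, 0 < η → ∃ δ' : ℝ, 0 < δ' ∧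
      ∀ A : Set ℝ, MeasurableSet A → A ⊆ Set.Icc (0:ℝ) T →
        volume A < ENNReal.ofReal δ' →
        ∀ ρ : ℝ × E → ℝ, Measurable ρ → (∀ p, 0 ≤ ρ p) →
          (∫⁻ p, ENNReal.ofReal (ρ p * Real.log (ρ p) - ρ p + 1) ∂lamT
            ≤ ENNReal.ofReal Υ) →
          ∫⁻ p in A ×ˢ (Set.univ : Set E),
              ENNReal.ofReal (G p * |ρ p - 1|) ∂lamT ≤ ENNReal.ofReal η :=
  equi_absolute_continuity_controls_general lam T lamT hlamT G hGmeas hGsq δ hδ hexp Υ hΥ
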